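/- arXiv:1602.07617 — 4 statements merged into one kernel-verified Lean document; each statement's English description precedes it below -/
import Mathlib

section
/- Let G be a finite 2'-elusive biquasiprimitive permutation group on Ω with point stabiliser H and let N be a minimal normal subgroup of G. Then N is contained in G⁺ and G⁺ = NH, where G⁺ is the index-two subgroup of G fixing setwise the two orbits of a fixed intransitive nontrivial normal subgroup. -/
open MulAction

lemma three_le_card_aux {α : Type*} [Finite α] {a b c : α}
    (h1 : a ≠ b) (h2 : a ≠ c) (h3 : b ≠ c) : 3 ≤ Nat.card α := by
  have := Fintype.ofFinite α
  rw [Nat.card_eq_fintype_card]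
  exact Fintype.two_lt_card_iff.2 ⟨a, b, c, h1, h2, h3⟩



/-- Lemma 4.1: in a finite 2'-elusive biquasiprimitive group `G` with point
stabiliser `H = G_α`, every minimal normal subgroup `N` is contained in `G⁺`
and `G⁺ = NH`. -/
theorem stmt_6 {G Ω : Type*} [Group G] [Finite G] [Finite Ω] [MulAction G Ω]
    [FaithfulSMul G Ω] [MulAction.IsPretransitive G Ω]
    -- 2'-elusive
    (hdeg : ∃ q : ℕ, q.Prime ∧ Odd q ∧ q ∣ Nat.card Ω)
    (helusive : ¬ ∃ x : G, (∃ r : ℕ, r.Prime ∧ Odd r ∧ orderOf x = r) ∧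
      ∀ ω : Ω, x • ω ≠ ω)
    -- biquasiprimitive
    (hbi : ∀ M : Subgroup G, M.Normal → M ≠ ⊥ →
      Nat.card (MulAction.orbitRel.Quotient M Ω) ≤ 2)
    (M₀ : Subgroup G) (hM₀n : M₀.Normal) (hM₀bot : M₀ ≠ ⊥)
    (hM₀two : Nat.card (MulAction.orbitRel.Quotient M₀ Ω) = 2)
    -- G⁺ : the index-two subgroup fixing the two M₀-orbits setwise
    (Gplus : Subgroup G) (hGpidx : Gplus.index = 2)
    (hGp : ∀ g : G, g ∈ Gplus ↔ ∀ ω : Ω, g • ω ∈ MulAction.orbit M₀ ω)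
    -- minimal normal subgroup N, point stabiliser H
    (N : Subgroup G) (hNn : N.Normal) (hNbot : N ≠ ⊥)
    (hNmin : ∀ M : Subgroup G, M.Normal → M ≤ N → M = ⊥ ∨ M = N)
    (α : Ω) :
    N ≤ Gplus ∧ Gplus = N ⊔ MulAction.stabilizer G α := by
  classical
  have hNempty : Nonempty Ω := ⟨α⟩
  -- conjugation moves M₀-orbits to M₀-orbits
  have hconj : ∀ (g : G) (a b : Ω), a ∈ orbit M₀ b → g • a ∈ orbit M₀ (g • b) := by
    rintro g a b ⟨m, rfl⟩
    exact ⟨⟨g * m * g⁻¹, hM₀n.conj_mem _ m.2 g⟩, by simp [Subgroup.smul_def, mul_smul]⟩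
  -- Gplus is normal
  have hGpn : Gplus.Normal := by
    constructor
    intro k hk g
    rw [hGp]
    intro ω
    have h1 := (hGp k).1 hk (g⁻¹ • ω)
    have h2 := hconj g _ _ h1
    simpa [mul_smul] using h2
  -- quotient mk for M₀ and N
  set Qm : Ω → orbitRel.Quotient M₀ Ω := Quotient.mk'' with hQmdef
  have hQm : ∀ a b : Ω, Qm a = Qm b ↔ a ∈ orbit M₀ b := by
    intro a b
    rw [hQmdef, Quotient.eq'']
    exact MulAction.orbitRel_apply
  set QmN : Ω → orbitRel.Quotient N Ω := Quotient.mk'' with hQmNdef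
  have hQmN : ∀ a b : Ω, QmN a = QmN b ↔ a ∈ orbit N b := by
    intro a b
    rw [hQmNdef, Quotient.eq'']
    exact MulAction.orbitRel_apply
  have hQsmul : ∀ (g : G) (a b : Ω), Qm a = Qm b → Qm (g • a) = Qm (g • b) := by
    intro g a b h
    exact (hQm _ _).2 (hconj g a b ((hQm a b).1 h))
  have hQsmul' : ∀ (g : G) (a b : Ω), Qm (g • a) = Qm (g • b) → Qm a = Qm b := by
    intro g a b h
    have := hQsmul g⁻¹ _ _ h
    simpa using this
  ------------------------------------------------------------------
  -- Part 1 : N ≤ Gplus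
  ------------------------------------------------------------------
  have hNGp : N ≤ Gplus := by
    have hinfn : (N ⊓ Gplus).Normal :=
      ⟨fun n hn g => ⟨hNn.conj_mem _ hn.1 g, hGpn.conj_mem _ hn.2 g⟩⟩
    rcases hNmin (N ⊓ Gplus) hinfn inf_le_left with hinf | hinf
    · -- impossible case : N ∩ Gplus = ⊥, so |N| = 2
      exfalso
      haveI := hGpn
      have hdisj : Gplus.subgroupOf N = ⊥ :=
        Subgroup.subgroupOf_eq_bot.2 (disjoint_iff.2 (by rwa [inf_comm] at hinf))
      have hrel : Gplus.relIndex N = Nat.card N := by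
        rw [Subgroup.relIndex, hdisj, Subgroup.index_bot]
      have hdvd2 : Nat.card N ∣ 2 := by
        rw [← hrel, ← hGpidx]
        exact Subgroup.relIndex_dvd_index_of_normal Gplus N
      have honeN : 1 < Nat.card N := (Subgroup.one_lt_card_iff_ne_bot N).2 hNbot
      have hcard2 : Nat.card N = 2 := by
        rcases (Nat.prime_two).eq_one_or_self_of_dvd _ hdvd2 with h | h
        · omega
        · exact h
      -- pick the nontrivial element x
      obtain ⟨a, ha⟩ := Subgroup.ne_bot_iff_exists_ne_one.1 hNbot
      set x : G := (a : G) with hxdef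
      have hx1 : x ≠ 1 := by
        intro h
        exact ha (Subtype.ext h)
      -- every element of N is 1 or x
      have huniq : ∀ y ∈ N, y = 1 ∨ y = x := by
        intro y hy
        by_contra hcon
        push_neg at hcon
        have h3 : (3 : ℕ) ≤ Nat.card N :=
          three_le_card_aux (a := (1 : N)) (b := a) (c := ⟨y, hy⟩)
            (Ne.symm ha) (fun h => hcon.1 (congrArg Subtype.val h).symm)
            (fun h => hcon.2 (congrArg Subtype.val h).symm)
        omega
      -- x is central
      have hcomm : ∀ g : G, g * x = x * g := by
        intro g
        have hmem : g * x * g⁻¹ ∈ N := hNn.conj_mem _ a.2 g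
        rcases huniq _ hmem with h | h
        · exfalso
          apply hx1
          have : g * x * g⁻¹ * g = 1 * g := by rw [h]
          group at this
          simpa using this
        · calc g * x = g * x * g⁻¹ * g := by group
            _ = x * g := by rw [h]
      -- |Ω| ≤ 4
      have horble : ∀ ω : Ω, (orbit N ω).ncard ≤ 2 := by
        intro ω
        rw [← Nat.card_coe_set_eq, ← hcard2]
        apply Nat.card_le_card_of_surjective (fun n : N => (⟨n • ω, mem_orbit _ _⟩ : orbit N ω))
        rintro ⟨_, n, rfl⟩
        exact ⟨n, rfl⟩
      have hQN := hbi N hNn hNbot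
      obtain ⟨β, hβcov⟩ : ∃ β : Ω, ∀ ω : Ω, ω ∈ orbit N α ∨ ω ∈ orbit N β := by
        by_cases h : ∀ ω : Ω, ω ∈ orbit N α
        · exact ⟨α, fun ω => Or.inl (h ω)⟩
        · push_neg at h
          obtain ⟨β, hβ⟩ := h
          refine ⟨β, fun ω => ?_⟩
          by_contra hcon
          push_neg at hcon
          have hne1 : QmN ω ≠ QmN α := fun h => hcon.1 ((hQmN _ _).1 h)
          have hne2 : QmN ω ≠ QmN β := fun h => hcon.2 ((hQmN _ _).1 h)
          have hne3 : QmN α ≠ QmN β := fun h => hβ ((hQmN _ _).1 h.symm)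
          have := three_le_card_aux hne1 hne2 hne3
          omega
      have hΩ4 : Nat.card Ω ≤ 4 := by
        have huniv : (Set.univ : Set Ω) = orbit N α ∪ orbit N β := by
          apply Set.eq_of_subset_of_subset
          · intro ω _
            exact hβcov ω
          · exact Set.subset_univ _
        calc Nat.card Ω = (Set.univ : Set Ω).ncard := (Set.ncard_univ _).symm
          _ = (orbit N α ∪ orbit N β).ncard := by rw [huniv]
          _ ≤ (orbit N α).ncard + (orbit N β).ncard := Set.ncard_union_le _ _
          _ ≤ 4 := by have := horble α; have := horble β; omega
      -- |Ω| = 3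
      obtain ⟨q, hq, hodd, hdvd⟩ := hdeg
      have hΩpos : 0 < Nat.card Ω := Nat.card_pos
      have hqle : q ≤ Nat.card Ω := Nat.le_of_dvd hΩpos hdvd
      have hq2 : 2 ≤ q := hq.two_le
      have hoddq : q % 2 = 1 := Nat.odd_iff.1 hodd
      have hq3 : q = 3 := by omega
      subst hq3
      have hΩ3 : Nat.card Ω = 3 := by
        obtain ⟨m, hm⟩ := hdvd
        omega
      -- N is a 2-group, so it has a fixed point on Ω (|Ω| = 3 odd)
      have hpg : IsPGroup 2 N := IsPGroup.of_card (by rw [hcard2, pow_one])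
      have hmod := hpg.card_modEq_card_fixedPoints Ω
      have hfpne : Nat.card (fixedPoints N Ω) ≠ 0 := by
        intro h
        rw [hΩ3, h] at hmod
        have : 3 % 2 = 0 % 2 := hmod
        omega
      have hfp : Nonempty (fixedPoints N Ω) := (Nat.card_ne_zero.1 hfpne).1
      obtain ⟨⟨β₁, hβ₁⟩⟩ := hfp
      -- x fixes β₁, x central, G transitive ⇒ x fixes everything
      have hxβ : x • β₁ = β₁ := by
        have := hβ₁ (a : N)
        simpa [Subgroup.smul_def] using this
      have hxall : ∀ ω : Ω, x • ω = ω := by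
        intro ω
        obtain ⟨g, rfl⟩ := MulAction.exists_smul_eq G β₁ ω
        calc x • g • β₁ = (x * g) • β₁ := (mul_smul _ _ _).symm
          _ = (g * x) • β₁ := by rw [hcomm g]
          _ = g • x • β₁ := mul_smul _ _ _
          _ = g • β₁ := by rw [hxβ]
      apply hx1
      apply eq_of_smul_eq_smul (α := Ω)
      intro ω
      rw [hxall ω, one_smul]
    · exact inf_eq_left.1 hinf
  ------------------------------------------------------------------
  -- Part 2 : Gplus = N ⊔ stabilizer
  ------------------------------------------------------------------
  refine ⟨hNGp, ?_⟩
  -- the "other" M₀-orbit class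
  obtain ⟨o, honeo, hocov⟩ : ∃ o : orbitRel.Quotient M₀ Ω, o ≠ Qm α ∧
      ∀ c : orbitRel.Quotient M₀ Ω, c = Qm α ∨ c = o := by
    obtain ⟨u, v, huv, hcov⟩ := Nat.card_eq_two_iff.1 hM₀two
    have hcov' : ∀ c : orbitRel.Quotient M₀ Ω, c = u ∨ c = v := by
      intro c
      have : c ∈ ({u, v} : Set _) := hcov ▸ Set.mem_univ c
      simpa using this
    rcases hcov' (Qm α) with h | h
    · refine ⟨v, by rw [h]; exact Ne.symm huv, fun c => ?_⟩
      rcases hcov' c with h' | h'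
      · exact Or.inl (h'.trans h.symm)
      · exact Or.inr h'
    · refine ⟨u, by rw [h]; exact huv, fun c => ?_⟩
      rcases hcov' c with h' | h'
      · exact Or.inr h'
      · exact Or.inl (h'.trans h.symm)
  obtain ⟨β₀, hβ₀⟩ : ∃ β₀ : Ω, Qm β₀ = o := by
    obtain ⟨b, hb⟩ := Quotient.exists_rep o
    exact ⟨b, by rw [hQmdef, Quotient.mk''_eq_mk, hb]⟩
  -- the stabilizer is contained in Gplus
  have hHle : stabilizer G α ≤ Gplus := by
    intro h hh
    rw [hGp]
    intro ω
    rw [← hQm]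
    have hhα : h • α = α := hh
    rcases hocov (Qm ω) with hc | hc
    · have : Qm (h • ω) = Qm (h • α) := hQsmul h _ _ hc
      rw [hhα] at this
      rw [this, hc]
    · rcases hocov (Qm (h • ω)) with hc' | hc'
      · exfalso
        have h1 : Qm (h • ω) = Qm (h • α) := by rw [hc', hhα]
        have h2 := hQsmul' h _ _ h1
        rw [hc] at h2
        exact honeo h2
      · rw [hc', hc]
  -- orbit M₀ α ⊆ orbit N α
  have hβ₀notN : β₀ ∉ orbit N α := by
    intro hmem
    obtain ⟨n, hn⟩ := hmem
    have hmem2 : (n : G) • α ∈ orbit M₀ α := (hGp _).1 (hNGp n.2) α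
    simp only [Subgroup.smul_def] at hn
    rw [hn] at hmem2
    apply honeo
    rw [← hβ₀]
    exact (hQm _ _).2 hmem2
  have horbeq : orbit M₀ α ⊆ orbit N α := by
    intro ω hω
    by_contra hcon
    have hQN := hbi N hNn hNbot
    have hne1 : QmN ω ≠ QmN α := fun h => hcon ((hQmN _ _).1 h)
    have hne3 : QmN α ≠ QmN β₀ := fun h => hβ₀notN ((hQmN _ _).1 h.symm)
    have hne2 : QmN ω ≠ QmN β₀ := by
      intro h
      obtain ⟨n, hn⟩ := (hQmN _ _).1 h
      have hmem2 : (n : G) • β₀ ∈ orbit M₀ β₀ := (hGp _).1 (hNGp n.2) β₀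
      simp only [Subgroup.smul_def] at hn
      rw [hn] at hmem2
      have h1 : Qm ω = o := hβ₀ ▸ (hQm _ _).2 hmem2
      have h2 : Qm ω = Qm α := (hQm _ _).2 hω
      exact honeo (h1.symm.trans h2)
    have := three_le_card_aux hne1 hne2 hne3
    omega
  -- conclude
  apply le_antisymm
  · intro g hg
    have h1 : g • α ∈ orbit M₀ α := (hGp g).1 hg α
    obtain ⟨n, hn⟩ := horbeq h1
    simp only [Subgroup.smul_def] at hn
    have hst : (n : G)⁻¹ * g ∈ stabilizer G α := by
      rw [MulAction.mem_stabilizer_iff, mul_smul, ← hn, ← mul_smul, inv_mul_cancel, one_smul]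
    have hgdecomp : g = (n : G) * ((n : G)⁻¹ * g) := by group
    rw [hgdecomp]
    exact Subgroup.mul_mem _ (Subgroup.mem_sup_left n.2) (Subgroup.mem_sup_right hst)
  · exact sup_le hNGp hHle
end

section
/- Let p be a Mersenne prime and let T = PSL(2,p) act on the set Ω of right cosets of a subgroup H with C_p ⋊ C_r ≤ H ≤ C_p ⋊ C_{(p-1)/2}, where r is the product of the distinct prime divisors of (p-1)/2. Then H meets every conjugacy class of elements of odd prime order in T; equivalently, T has no derangement of odd prime order on Ω. -/
/-!
An element of order `p` is conjugate into `P ≤ H` by Sylow's theorem. For an odd prime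
`q ≠ p` dividing `|T|`, the order `|SL(2, p)| = p (p + 1) (p - 1)` with `p + 1 = 2 ^ n`
forces `q ∣ (p - 1) / 2`, so `H` contains an element of order `q`. The diagonal torus of
`SL(2, p)` is cyclic of index `p (p + 1)`, prime to `q`, so the Sylow `q`-subgroups of `SL(2, p)`,
and hence of its quotient `T`, are cyclic; in such a group any two subgroups of order `q` are
conjugate.
-/

open scoped MatrixGroups

theorem IsCyclic.mem_zpowers_of_orderOf_eq {G : Type*} [Group G] [Finite G] [IsCyclic G]
    {a b : G} (h : orderOf a = orderOf b) : a ∈ Subgroup.zpowers b := by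
  classical
  have := Fintype.ofFinite G
  -- A cyclic group has at most `n` solutions of `z ^ n = 1`, and `⟨b⟩` already supplies `n`.
  let S : Finset G := {z | z ^ orderOf b = 1}
  have hsub : (Subgroup.zpowers b : Set G).toFinset ⊆ S := by
    intro z hz
    obtain ⟨k, rfl⟩ := Set.mem_toFinset.mp hz
    simp only [S, Finset.mem_filter, Finset.mem_univ, true_and]
    rw [← zpow_natCast, ← zpow_mul, mul_comm, zpow_mul, zpow_natCast, pow_orderOf_eq_one,
      one_zpow]
  have hcard : S.card ≤ (Subgroup.zpowers b : Set G).toFinset.card := by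
    rw [← Nat.card_eq_card_toFinset, SetLike.coe_sort_coe, Nat.card_zpowers]
    exact IsCyclic.card_pow_eq_one_le (orderOf_pos b)
  have haS : a ∈ S := by simp [S, ← h, pow_orderOf_eq_one]
  rw [← Finset.eq_of_subset_of_card_le hsub hcard] at haS
  simpa using haS

section Sylow

variable {G : Type*} [Group G] [Finite G] {q : ℕ} [Fact q.Prime]

theorem Sylow.exists_conj_mem (Q : Sylow q G) {x : G} (hx : ∃ k, orderOf x = q ^ k) :
    ∃ g : G, g * x * g⁻¹ ∈ Q := by
  obtain ⟨k, hk⟩ := hx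
  have hpx : IsPGroup q (Subgroup.zpowers x) := IsPGroup.of_card (by rw [Nat.card_zpowers, hk])
  obtain ⟨Q₁, hQ₁⟩ := hpx.exists_le_sylow
  obtain ⟨g, rfl⟩ := MulAction.exists_smul_eq G Q₁ Q
  have hmem :=
    Subgroup.smul_mem_pointwise_smul _ (MulAut.conj g) _ (hQ₁ (Subgroup.mem_zpowers x))
  rw [← Sylow.coe_subgroup_smul] at hmem
  exact ⟨g, hmem⟩

theorem Sylow.exists_conj_mem_of_isCyclic (Q : Sylow q G) [IsCyclic Q] {H : Subgroup G}
    (hH : q ∣ Nat.card H) {x : G} (hx : orderOf x = q) : ∃ g : G, g * x * g⁻¹ ∈ H := by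
  obtain ⟨y, hy⟩ := exists_prime_orderOf_dvd_card' q hH
  obtain ⟨a, ha⟩ := Q.exists_conj_mem ⟨1, by rw [hx, pow_one]⟩
  obtain ⟨b, hb⟩ := Q.exists_conj_mem (x := y)
    ⟨1, by rw [Subgroup.orderOf_coe, hy, pow_one]⟩
  have hord : orderOf (⟨a * x * a⁻¹, ha⟩ : Q) = orderOf (⟨b * y * b⁻¹, hb⟩ : Q) := by
    rw [Subgroup.orderOf_mk, Subgroup.orderOf_mk, ← MulAut.conj_apply, ← MulAut.conj_apply,
      MulEquiv.orderOf_eq, MulEquiv.orderOf_eq, Subgroup.orderOf_coe, hx, hy]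
  obtain ⟨k, hk⟩ := IsCyclic.mem_zpowers_of_orderOf_eq hord
  have hk' : b * (y : G) ^ k * b⁻¹ = a * x * a⁻¹ := by
    rw [← conj_zpow]; exact congrArg Subtype.val hk
  refine ⟨b⁻¹ * a, ?_⟩
  have hconj : b⁻¹ * a * x * (b⁻¹ * a)⁻¹ = (y : G) ^ k :=
    calc b⁻¹ * a * x * (b⁻¹ * a)⁻¹ = b⁻¹ * (a * x * a⁻¹) * b := by group
      _ = (y : G) ^ k := by rw [← hk']; group
  exact hconj ▸ H.zpow_mem y.2 k

theorem Sylow.exists_isCyclic_of_not_dvd_index {D : Subgroup G} [IsCyclic D]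
    (hD : ¬ q ∣ D.index) : ∃ Q : Sylow q G, IsCyclic Q := by
  let Q₀ : Sylow q D := default
  have hindex : ¬ q ∣ (Q₀.1.map D.subtype).index := by
    rw [Subgroup.index_map_subtype]
    exact Nat.Prime.not_dvd_mul Fact.out Q₀.not_dvd_index hD
  exact ⟨(Q₀.2.map D.subtype).toSylow hindex,
    Subgroup.isCyclic_of_le (Subgroup.map_subtype_le _)⟩

end Sylow

namespace Matrix.SpecialLinearGroup

theorem card_mul_card_units {n R : Type*} [Fintype n] [DecidableEq n] [Nonempty n]
    [CommRing R] :
    Nat.card (SpecialLinearGroup n R) * Nat.card Rˣ = Nat.card (GL n R) := by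
  have hker : (GeneralLinearGroup.det : GL n R →* Rˣ).ker =
      (toGL : SpecialLinearGroup n R →* _).range :=
    SetLike.ext' (by rw [MonoidHom.coe_range, range_toGL]; rfl)
  rw [← Subgroup.card_mul_index GeneralLinearGroup.det.ker, Subgroup.index_ker,
    MonoidHom.range_eq_top.mpr GeneralLinearGroup.det_surjective, Subgroup.card_top, hker,
    Nat.card_congr (MonoidHom.ofInjective toGL_injective).toEquiv]

variable (F : Type*) [Field F]

theorem card_fin_two [Finite F] :
    Nat.card SL(2, F) = Nat.card F * (Nat.card F + 1) * (Nat.card F - 1) := by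
  have := Fintype.ofFinite F
  have h := card_mul_card_units (n := Fin 2) (R := F)
  rw [Matrix.card_GL_field, Fin.prod_univ_two, Nat.card_units, ← Nat.card_eq_fintype_card] at h
  obtain ⟨k, hk⟩ : ∃ k, Nat.card F = k + 2 :=
    ⟨Nat.card F - 2, by have := Finite.one_lt_card (α := F); omega⟩
  rw [hk] at h ⊢
  simp only [Fin.val_zero, Fin.val_one, pow_zero, pow_one, show k + 2 - 1 = k + 1 by omega] at h ⊢
  rw [Nat.sub_eq_of_eq_add (show (k + 2) ^ 2 = (k + 3) * (k + 1) + 1 by ring),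
    Nat.sub_eq_of_eq_add (show (k + 2) ^ 2 = (k + 2) * (k + 1) + (k + 2) by ring)] at h
  apply Nat.eq_of_mul_eq_mul_right (show 0 < k + 1 by omega)
  rw [h]
  ring

noncomputable def diagonalTorus : Fˣ →* SL(2, F) where
  toFun u := diag2 u u.ne_zero
  map_one' := Subtype.ext (by simp [diag2_coe', Matrix.one_fin_two])
  map_mul' u v := Subtype.ext (by simp [diag2_coe', mul_comm])

theorem diagonalTorus_apply (u : Fˣ) : diagonalTorus F u = diag2 (u : F) u.ne_zero := rfl

theorem diagonalTorus_injective : Function.Injective (diagonalTorus F) := fun u v h ↦ by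
  have h00 := congrArg (fun A : SL(2, F) ↦ (A : Matrix (Fin 2) (Fin 2) F) 0 0) h
  simpa [diagonalTorus_apply, diag2_coe', Units.ext_iff] using h00

instance [Finite F] : IsCyclic (diagonalTorus F).range :=
  isCyclic_of_surjective _ (diagonalTorus F).rangeRestrict_surjective

theorem index_range_diagonalTorus [Finite F] :
    (diagonalTorus F).range.index = Nat.card F * (Nat.card F + 1) := by
  have h := (diagonalTorus F).range.card_mul_index
  rw [card_fin_two, ← Nat.card_congr (MonoidHom.ofInjective (diagonalTorus_injective F)).toEquiv,
    Nat.card_units, mul_comm] at h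
  exact Nat.eq_of_mul_eq_mul_right (by have := Finite.one_lt_card (α := F); omega) h

end Matrix.SpecialLinearGroup

namespace Matrix.ProjectiveSpecialLinearGroup

variable {F : Type*} [Field F] [Finite F] {q : ℕ} [Fact q.Prime]

theorem exists_isCyclic_sylow_fin_two (hq : ¬ q ∣ Nat.card F * (Nat.card F + 1)) :
    ∃ Q : Sylow q PSL(2, F), IsCyclic Q := by
  obtain ⟨Q, _⟩ := Sylow.exists_isCyclic_of_not_dvd_index (q := q)
    (D := (SpecialLinearGroup.diagonalTorus F).range)
    (by rwa [SpecialLinearGroup.index_range_diagonalTorus])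
  exact ⟨Q.mapSurjective (QuotientGroup.mk'_surjective _),
    isCyclic_of_surjective _ (MonoidHom.subgroupMap_surjective _ _)⟩

theorem dvd_card_sub_one_of_dvd_card_fin_two (hq : ¬ q ∣ Nat.card F * (Nat.card F + 1))
    (h : q ∣ Nat.card PSL(2, F)) : q ∣ Nat.card F - 1 := by
  have hSL : q ∣ Nat.card SL(2, F) := h.trans (Subgroup.card_quotient_dvd_card _)
  rw [SpecialLinearGroup.card_fin_two] at hSL
  exact ((Nat.Prime.dvd_mul Fact.out).mp hSL).resolve_left hq

end Matrix.ProjectiveSpecialLinearGroup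

theorem stmt_12_general (p : ℕ) [Fact p.Prime] (hmersenne : ∃ n : ℕ, p = 2 ^ n - 1)
    (P : Sylow p (Matrix.ProjectiveSpecialLinearGroup (Fin 2) (ZMod p)))
    (H : Subgroup (Matrix.ProjectiveSpecialLinearGroup (Fin 2) (ZMod p)))
    (hPH : (P : Subgroup (Matrix.ProjectiveSpecialLinearGroup (Fin 2) (ZMod p))) ≤ H)
    (hdiv : ∀ q : ℕ, q.Prime → q ∣ (p - 1) / 2 → q ∣ Nat.card H) :
    ∀ x : Matrix.ProjectiveSpecialLinearGroup (Fin 2) (ZMod p),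
      ∀ q : ℕ, q.Prime → Odd q → orderOf x = q →
        ∃ g : Matrix.ProjectiveSpecialLinearGroup (Fin 2) (ZMod p),
          g * x * g⁻¹ ∈ H := by
  intro x q hq hodd hx
  have := Fact.mk hq
  obtain rfl | hqp := eq_or_ne q p
  · obtain ⟨g, hg⟩ := P.exists_conj_mem ⟨1, by rw [hx, pow_one]⟩
    exact ⟨g, hPH hg⟩
  obtain ⟨n, hn⟩ := hmersenne
  have hpow : p + 1 = 2 ^ n := by have := Nat.one_le_two_pow (n := n); omega
  have hq2 : ¬ q ∣ 2 ^ n := fun h ↦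
    hq.one_lt.ne' ((hodd.coprime_two_right.pow_right n).eq_one_of_dvd h)
  have hqF : ¬ q ∣ Nat.card (ZMod p) * (Nat.card (ZMod p) + 1) := by
    rw [Nat.card_zmod, hpow]
    exact hq.not_dvd_mul (fun h ↦ hqp ((Nat.prime_dvd_prime_iff_eq hq Fact.out).mp h)) hq2
  obtain ⟨Q, _⟩ := Matrix.ProjectiveSpecialLinearGroup.exists_isCyclic_sylow_fin_two hqF
  refine Q.exists_conj_mem_of_isCyclic (hdiv q hq ?_) hx
  have hqp1 : q ∣ p - 1 := Nat.card_zmod p ▸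
    Matrix.ProjectiveSpecialLinearGroup.dvd_card_sub_one_of_dvd_card_fin_two hqF
      (hx ▸ orderOf_dvd_natCard x)
  have hp1 : 2 ∣ p - 1 := by
    have hn0 : n ≠ 0 := by rintro rfl; exact (Fact.out : p.Prime).ne_zero (by simpa using hn)
    have : 2 ∣ p + 1 := hpow ▸ dvd_pow_self 2 hn0
    omega
  exact Nat.dvd_div_of_mul_dvd (hodd.coprime_two_right.symm.mul_dvd_of_dvd_of_dvd hp1 hqp1)

/-- For a Mersenne prime `p` and a subgroup `H` of `T = PSL(2, p)` with
`C_p ⋊ C_r ≤ H ≤ C_p ⋊ C_{(p-1)/2}` (encoded as: `H` contains a Sylow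
`p`-subgroup `P`, is contained in the Borel subgroup `N_T(P) = C_p ⋊ C_{(p-1)/2}`,
and `|H|` is divisible by every prime divisor of `(p-1)/2`), the subgroup `H`
meets every conjugacy class of elements of odd prime order in `T`; equivalently,
`T` has no derangement of odd prime order on the cosets of `H`. -/
theorem stmt_12 (p : ℕ) [Fact p.Prime] (hmersenne : ∃ n : ℕ, p = 2 ^ n - 1)
    (P : Sylow p (Matrix.ProjectiveSpecialLinearGroup (Fin 2) (ZMod p)))
    (H : Subgroup (Matrix.ProjectiveSpecialLinearGroup (Fin 2) (ZMod p)))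
    (hPH : (P : Subgroup (Matrix.ProjectiveSpecialLinearGroup (Fin 2) (ZMod p))) ≤ H)
    (hHB : H ≤ Subgroup.normalizer (P : Subgroup (Matrix.ProjectiveSpecialLinearGroup (Fin 2) (ZMod p))))
    (hdiv : ∀ q : ℕ, q.Prime → q ∣ (p - 1) / 2 → q ∣ Nat.card H) :
    ∀ x : Matrix.ProjectiveSpecialLinearGroup (Fin 2) (ZMod p),
      ∀ q : ℕ, q.Prime → Odd q → orderOf x = q →
        ∃ g : Matrix.ProjectiveSpecialLinearGroup (Fin 2) (ZMod p),
          g * x * g⁻¹ ∈ H :=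
  stmt_12_general p hmersenne P H hPH hdiv
end

section
/- Let L ≤ Sym(Δ) be a finite transitive 2'-elusive permutation group and let K ≤ S_k be a transitive subgroup with k ≥ 2. Then the wreath product L ≀ K acting on Δ^k via the product action is also 2'-elusive. -/
/-!
Write `w x i = f i (x (σ⁻¹ i))` and let `w` have odd prime order `q`. Since `Δ` is nontrivial,
`w ^ q = 1` forces `σ ^ q = 1`, so every `σ`-orbit is a point or has length exactly `q`. On a
`σ`-fixed coordinate `t` the component `f t` satisfies `f t ^ q = 1`, so by 2'-elusivity of `L` it
fixes some point of `Δ`. Starting from such a `y`, set `x i := (w ^ m i) y i`, where `σ ^ m i`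
carries a chosen representative of the orbit of `i` to `i`: the exponent `m i` is well defined
modulo `q` on orbits of length `q`, and irrelevant on `σ`-fixed coordinates, which makes `x` a
fixed point of `w`.
-/

open Function Equiv

theorem MulAction.pow_smul_eq_pow_smul_iff_modEq {G α : Type*} [Group G] [MulAction G α]
    {g : G} {a : α} {m n : ℕ} :
    g ^ m • a = g ^ n • a ↔ m ≡ n [MOD minimalPeriod (g • ·) a] := by
  rw [Nat.modEq_iff_dvd, ← zpow_smul_eq_iff_minimalPeriod_dvd, sub_eq_neg_add, zpow_add,
    mul_smul, zpow_neg, zpow_natCast, zpow_natCast, inv_smul_eq_iff, eq_comm]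

namespace ProductAction

variable {ι Δ : Type*} {σ : Perm ι} {F : ι → Perm Δ} {w : Perm (ι → Δ)}

theorem pow_apply_congr (hw : ∀ x i, w x i = F i (x (σ⁻¹ i))) (n : ℕ) {x x' : ι → Δ} {i : ι}
    (h : x ((σ ^ n)⁻¹ i) = x' ((σ ^ n)⁻¹ i)) : (w ^ n) x i = (w ^ n) x' i := by
  induction n generalizing i with
  | zero => simpa using h
  | succ n ih =>
    rw [pow_succ' w, Perm.mul_apply, Perm.mul_apply, hw, hw, ih]
    rwa [← Perm.mul_apply, ← mul_inv_rev, ← pow_succ']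

theorem pow_apply_of_apply_eq_self (hw : ∀ x i, w x i = F i (x (σ⁻¹ i))) (n : ℕ) (x : ι → Δ)
    {t : ι} (ht : σ t = t) : (w ^ n) x t = (F t ^ n) (x t) := by
  have ht' : σ⁻¹ t = t := Perm.inv_eq_iff_eq.mpr ht.symm
  induction n with
  | zero => rfl
  | succ n ih => rw [pow_succ', pow_succ', Perm.mul_apply, hw, ht', ih, Perm.mul_apply]

theorem pow_eq_one_of_pow_eq_one [Nontrivial Δ] (hw : ∀ x i, w x i = F i (x (σ⁻¹ i))) {n : ℕ}
    (hn : w ^ n = 1) : σ ^ n = 1 := by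
  classical
  rw [← inv_eq_one]
  ext i
  rw [Perm.one_apply]
  by_contra hi
  obtain ⟨a, b, hab⟩ := exists_pair_ne Δ
  have := pow_apply_congr hw n (x := fun _ => a) (x' := update (fun _ => a) i b) (i := i)
    (by rw [update_of_ne hi])
  simp [hn, hab] at this

theorem coord_pow_eq_one (hw : ∀ x i, w x i = F i (x (σ⁻¹ i))) {n : ℕ} (hn : w ^ n = 1) {t : ι}
    (ht : σ t = t) : F t ^ n = 1 := by
  ext a
  simpa [hn] using (pow_apply_of_apply_eq_self hw n (fun _ => a) ht).symm

theorem pow_apply_eq_pow_apply [Nontrivial Δ] (hw : ∀ x i, w x i = F i (x (σ⁻¹ i))) {q : ℕ}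
    (hq : q.Prime) (hwq : orderOf w = q) {y : ι → Δ} (hy : ∀ t, σ t = t → F t (y t) = y t)
    {a b : ℕ} {i j : ι} (ha : (σ ^ a) j = i) (hb : (σ ^ b) j = i) :
    (w ^ a) y i = (w ^ b) y i := by
  by_cases hj : σ j = j
  · have hji : j = i := by rw [← ha, Perm.pow_apply_eq_self_of_apply_eq_self hj]
    subst hji
    rw [pow_apply_of_apply_eq_self hw a y hj, pow_apply_of_apply_eq_self hw b y hj,
      Perm.pow_apply_eq_self_of_apply_eq_self (hy j hj),
      Perm.pow_apply_eq_self_of_apply_eq_self (hy j hj)]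
  · have := Fact.mk hq
    have hσq : σ ^ q = 1 := pow_eq_one_of_pow_eq_one hw (hwq ▸ pow_orderOf_eq_one w)
    have hperiod : minimalPeriod (σ • ·) j = q :=
      minimalPeriod_eq_prime_iff.mpr
        ⟨show (⇑σ)^[q] j = j by rw [Perm.iterate_eq_pow, hσq, Perm.one_apply], hj⟩
    have hab : a ≡ b [MOD q] := by
      rw [← hperiod, ← MulAction.pow_smul_eq_pow_smul_iff_modEq]
      exact ha.trans hb.symm
    rw [pow_eq_pow_iff_modEq.mpr (hwq ▸ hab)]

theorem exists_apply_eq_self [Finite ι] [Nontrivial Δ] (hw : ∀ x i, w x i = F i (x (σ⁻¹ i)))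
    {q : ℕ} (hq : q.Prime) (hwq : orderOf w = q) (hfix : ∀ t, σ t = t → ∃ d, F t d = d) :
    ∃ x, w x = x := by
  choose! y hy using hfix
  let r : ι → ι := fun i => (Quotient.mk (Perm.SameCycle.setoid σ) i).out
  have hr_inv (i : ι) : r (σ⁻¹ i) = r i :=
    congrArg Quotient.out (Quotient.sound ⟨1, by simp⟩)
  choose m hm using fun i => (Quotient.mk_out (s := Perm.SameCycle.setoid σ) i).exists_nat_pow_eq
  refine ⟨fun i => (w ^ m i) y i, funext fun i => ?_⟩
  have hstep : (σ ^ (m (σ⁻¹ i) + 1)) (r i) = i := by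
    rw [pow_succ', Perm.mul_apply, ← hr_inv, hm, Perm.inv_def, apply_symm_apply]
  rw [hw, ← hw, ← Perm.mul_apply, ← pow_succ']
  exact pow_apply_eq_pow_apply hw hq hwq hy hstep (hm i)

end ProductAction

theorem stmt_15_general {Δ : Type*} (k : ℕ) (hk : 2 ≤ k)
    (L : Subgroup (Equiv.Perm Δ)) (K : Subgroup (Equiv.Perm (Fin k)))
    -- L is 2'-elusive on Δ
    (hLdeg : ∃ q : ℕ, q.Prime ∧ Odd q ∧ q ∣ Nat.card Δ)
    (hLel : ∀ x : L, ∀ q : ℕ, q.Prime → Odd q → orderOf x = q →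
      ∃ δ : Δ, (x : Equiv.Perm Δ) δ = δ) :
    -- the product action of L ≀ K on Δ^k is 2'-elusive
    (∃ q : ℕ, q.Prime ∧ Odd q ∧ q ∣ Nat.card (Fin k → Δ)) ∧
    ∀ w : Equiv.Perm (Fin k → Δ),
      (∃ (f : Fin k → L) (σ : K), ∀ (x : Fin k → Δ) (i : Fin k),
        w x i = (f i : Equiv.Perm Δ) (x (((σ : Equiv.Perm (Fin k)))⁻¹ i))) →
      ∀ q : ℕ, q.Prime → Odd q → orderOf w = q →
        ∃ x : Fin k → Δ, w x = x := by
  refine ⟨?_, ?_⟩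
  · obtain ⟨q, hq, hqo, hqΔ⟩ := hLdeg
    refine ⟨q, hq, hqo, ?_⟩
    rw [Nat.card_fun, Nat.card_fin]
    exact hqΔ.trans (dvd_pow_self _ (by omega))
  · rintro w ⟨f, σ, hw⟩ q hq hqo hwq
    have : Nontrivial Δ := by
      by_contra hΔ
      rw [not_nontrivial_iff_subsingleton] at hΔ
      exact hq.ne_one (hwq ▸ orderOf_eq_one_iff.mpr (Subsingleton.elim w 1))
    refine ProductAction.exists_apply_eq_self hw hq hwq fun t ht => ?_
    have hft : f t ^ q = 1 :=
      Subtype.ext (by simpa using ProductAction.coord_pow_eq_one hw (hwq ▸ pow_orderOf_eq_one w) ht)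
    rcases hq.eq_one_or_self_of_dvd _ (orderOf_dvd_of_pow_eq_one hft) with hft1 | hftq
    · exact ⟨Classical.arbitrary Δ, by simp [orderOf_eq_one_iff.mp hft1]⟩
    · exact hLel (f t) q hq hqo hftq

/-- Lemma 3.2: if `L ≤ Sym(Δ)` is a finite transitive 2'-elusive permutation
group and `K ≤ S_k` is transitive with `k ≥ 2`, then the wreath product
`L ≀ K` in its product action on `Δ^k` is 2'-elusive. The elements of `L ≀ K`
in the product action are the permutations `w` of `Δ^k` of the form
`(w x) i = f i (x (σ⁻¹ i))` with `f : Fin k → L` and `σ ∈ K`. -/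
theorem stmt_15 {Δ : Type*} [Finite Δ] (k : ℕ) (hk : 2 ≤ k)
    (L : Subgroup (Equiv.Perm Δ)) (K : Subgroup (Equiv.Perm (Fin k)))
    (hLtrans : MulAction.IsPretransitive L Δ)
    (hKtrans : MulAction.IsPretransitive K (Fin k))
    -- L is 2'-elusive on Δ
    (hLdeg : ∃ q : ℕ, q.Prime ∧ Odd q ∧ q ∣ Nat.card Δ)
    (hLel : ∀ x : L, ∀ q : ℕ, q.Prime → Odd q → orderOf x = q →
      ∃ δ : Δ, (x : Equiv.Perm Δ) δ = δ) :
    -- the product action of L ≀ K on Δ^k is 2'-elusive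
    (∃ q : ℕ, q.Prime ∧ Odd q ∧ q ∣ Nat.card (Fin k → Δ)) ∧
    ∀ w : Equiv.Perm (Fin k → Δ),
      (∃ (f : Fin k → L) (σ : K), ∀ (x : Fin k → Δ) (i : Fin k),
        w x i = (f i : Equiv.Perm Δ) (x (((σ : Equiv.Perm (Fin k)))⁻¹ i))) →
      ∀ q : ℕ, q.Prime → Odd q → orderOf w = q →
        ∃ x : Fin k → Δ, w x = x :=
  stmt_15_general k hk L K hLdeg hLel
end

section
/- Let G ≤ Sym(Ω) be a finite 2'-elusive biquasiprimitive permutation group. Then G has no minimal normal subgroup of order 2 complementing G⁺; in particular every minimal normal subgroup of G is contained in G⁺. -/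
open MulAction

lemma orbit_card_dvd_aux {G Ω : Type*} [Group G] [Finite G] [MulAction G Ω] (ω : Ω) :
    Nat.card (orbit G ω) ∣ Nat.card G := by
  rw [Nat.card_congr (orbitEquivQuotientStabilizer G ω), ← Subgroup.index_eq_card]
  exact (stabilizer G ω).index_dvd_card

lemma card_le_of_orbits {G Ω : Type*} [Group G] [Finite G] [Finite Ω] [MulAction G Ω]
    (h1 : Nat.card (orbitRel.Quotient G Ω) ≤ 2)
    (h2 : ∀ ω : Ω, Nat.card (orbit G ω) ≤ 2) :
    Nat.card Ω ≤ 4 := by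
  classical
  have := Fintype.ofFinite Ω
  have := Fintype.ofFinite (orbitRel.Quotient G Ω)
  rw [Nat.card_congr (selfEquivSigmaOrbits' G Ω)]
  have : ∀ q : orbitRel.Quotient G Ω, Nat.card q.orbit ≤ 2 := by
    intro q
    rw [orbitRel.Quotient.orbit_eq_orbit_out q Quotient.out_eq']
    exact h2 _
  have hf : ∀ q : orbitRel.Quotient G Ω, Finite q.orbit := fun q => Subtype.finite
  rw [Nat.card_eq_fintype_card, Fintype.card_sigma]
  calc (∑ q : orbitRel.Quotient G Ω, Fintype.card q.orbit)
      ≤ ∑ _q : orbitRel.Quotient G Ω, 2 := by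
        apply Finset.sum_le_sum
        intro q _
        rw [← Nat.card_eq_fintype_card]
        exact this q
    _ = Fintype.card (orbitRel.Quotient G Ω) * 2 := by
        rw [Finset.sum_const, Finset.card_univ, smul_eq_mul]
    _ ≤ 4 := by
        rw [← Nat.card_eq_fintype_card]
        omega

lemma core_contra {G Ω : Type*} [Group G] [Finite G] [Finite Ω] [MulAction G Ω]
    [FaithfulSMul G Ω] [MulAction.IsPretransitive G Ω]
    (hΩ : Nat.card Ω ≠ 0)
    (hdeg : ∃ q : ℕ, q.Prime ∧ Odd q ∧ q ∣ Nat.card Ω)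
    (helusive : ¬ ∃ x : G, (∃ r : ℕ, r.Prime ∧ Odd r ∧ orderOf x = r) ∧
      ∀ ω : Ω, x • ω ≠ ω)
    (hbi : ∀ M : Subgroup G, M.Normal → M ≠ ⊥ →
      Nat.card (MulAction.orbitRel.Quotient M Ω) ≤ 2)
    (N : Subgroup G) (hNn : N.Normal) (hN2 : Nat.card N = 2) : False := by
  classical
  obtain ⟨q, hq, hqodd, hqdvd⟩ := hdeg
  have hNbot : N ≠ ⊥ := by
    intro h
    rw [h, Subgroup.card_bot] at hN2
    omega
  -- card Ω ≤ 4
  have h4 : Nat.card Ω ≤ 4 := by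
    apply card_le_of_orbits (hbi N hNn hNbot)
    intro ω
    have := orbit_card_dvd_aux (G := N) (Ω := Ω) ω
    rw [hN2] at this
    exact Nat.le_of_dvd (by norm_num) this
  -- hence card Ω = 3
  have hqle : q ≤ Nat.card Ω := Nat.le_of_dvd (Nat.pos_of_ne_zero hΩ) hqdvd
  have hq2 := hq.two_le
  obtain ⟨m, hm⟩ := hqodd
  have hq3 : q = 3 := by omega
  subst hq3
  obtain ⟨k, hk⟩ := hqdvd
  have hΩ3 : Nat.card Ω = 3 := by omega
  -- Cauchy: element of order 3
  have h3G : (3 : ℕ) ∣ Nat.card G := by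
    obtain ⟨ω⟩ : Nonempty Ω := Nat.card_pos_iff.mp (by omega) |>.1
    have := orbit_card_dvd_aux (G := G) (Ω := Ω) ω
    rwa [MulAction.orbit_eq_univ, Nat.card_congr (Equiv.Set.univ Ω), hΩ3] at this
  have : Fact (Nat.Prime 3) := ⟨by norm_num⟩
  obtain ⟨x, hx⟩ := exists_prime_orderOf_dvd_card' (G := G) 3 h3G
  -- x is fixed-point-free
  have hfree : ∀ ω : Ω, x • ω ≠ ω := by
    intro ω hωfix
    -- x fixes ω; show x fixes everything
    have hfixall : ∀ ω' : Ω, x • ω' = ω' := by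
      have hHle : Subgroup.zpowers x ≤ MulAction.stabilizer G ω :=
        Subgroup.zpowers_le.mpr hωfix
      have horbω : ∀ a ∈ MulAction.orbit (Subgroup.zpowers x) ω, a = ω := by
        rintro a ⟨⟨g, hg⟩, rfl⟩
        exact hHle hg
      intro ω'
      have hd := orbit_card_dvd_aux (G := Subgroup.zpowers x) (Ω := Ω) ω'
      rw [Nat.card_zpowers, hx] at hd
      have hfin : (MulAction.orbit (Subgroup.zpowers x) ω').Finite := Set.toFinite _
      have hne : Nat.card (MulAction.orbit (Subgroup.zpowers x) ω') ≠ 0 := by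
        have : Nonempty (MulAction.orbit (Subgroup.zpowers x) ω') :=
          ⟨⟨ω', MulAction.mem_orbit_self ω'⟩⟩
        exact Nat.card_pos.ne'
      rcases (Nat.prime_three).eq_one_or_self_of_dvd _ hd with hcard | hcard
      · -- orbit is a singleton, so x fixes ω'
        obtain ⟨a, ha⟩ := Nat.card_eq_one_iff_exists.mp hcard
        have h1 : (⟨ω', MulAction.mem_orbit_self ω'⟩ :
            MulAction.orbit (Subgroup.zpowers x) ω') = a := ha _
        have h2 : (⟨x • ω', MulAction.mem_orbit ω' (⟨x, Subgroup.mem_zpowers x⟩ :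
            Subgroup.zpowers x)⟩ : MulAction.orbit (Subgroup.zpowers x) ω') = a := ha _
        have := h1.trans h2.symm
        exact (Subtype.ext_iff.mp this).symm
      · -- orbit = univ, so ω in it, so ω' = ω
        have huniv : MulAction.orbit (Subgroup.zpowers x) ω' = Set.univ := by
          apply Set.eq_of_subset_of_ncard_le (Set.subset_univ _)
          rw [Set.ncard_univ, hΩ3, ← Nat.card_coe_set_eq, hcard]
        have hωmem : ω ∈ MulAction.orbit (Subgroup.zpowers x) ω' := by
          rw [huniv]; trivial
        have : ω' ∈ MulAction.orbit (Subgroup.zpowers x) ω :=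
          MulAction.mem_orbit_symm.mp hωmem
        have := horbω ω' this
        rw [this, hωfix]
    have hx1 : x = 1 := by
      apply eq_of_smul_eq_smul (α := Ω)
      intro a
      rw [hfixall a, one_smul]
    rw [hx1, orderOf_one] at hx
    omega
  exact helusive ⟨x, ⟨3, by norm_num, ⟨1, rfl⟩, hx⟩, hfree⟩

/-- A finite 2'-elusive biquasiprimitive group has no minimal normal subgroup of
order 2 complementing `G⁺`; in particular every minimal normal subgroup is
contained in `G⁺`. -/
theorem stmt_16 {G Ω : Type*} [Group G] [Finite G] [Finite Ω] [MulAction G Ω]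
    [FaithfulSMul G Ω] [MulAction.IsPretransitive G Ω]
    -- 2'-elusive
    (hdeg : ∃ q : ℕ, q.Prime ∧ Odd q ∧ q ∣ Nat.card Ω)
    (helusive : ¬ ∃ x : G, (∃ r : ℕ, r.Prime ∧ Odd r ∧ orderOf x = r) ∧
      ∀ ω : Ω, x • ω ≠ ω)
    -- biquasiprimitive
    (hbi : ∀ M : Subgroup G, M.Normal → M ≠ ⊥ →
      Nat.card (MulAction.orbitRel.Quotient M Ω) ≤ 2)
    (M₀ : Subgroup G) (hM₀n : M₀.Normal) (hM₀bot : M₀ ≠ ⊥)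
    (hM₀two : Nat.card (MulAction.orbitRel.Quotient M₀ Ω) = 2)
    -- G⁺ : the index-two subgroup fixing the two M₀-orbits setwise
    (Gplus : Subgroup G) (hGpidx : Gplus.index = 2)
    (hGp : ∀ g : G, g ∈ Gplus ↔ ∀ ω : Ω, g • ω ∈ MulAction.orbit M₀ ω) :
    (¬ ∃ N : Subgroup G, N.Normal ∧ N ≠ ⊥ ∧
        (∀ M : Subgroup G, M.Normal → M ≤ N → M = ⊥ ∨ M = N) ∧
        Nat.card N = 2 ∧ N ⊓ Gplus = ⊥ ∧ N ⊔ Gplus = ⊤) ∧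
    (∀ N : Subgroup G, N.Normal → N ≠ ⊥ →
      (∀ M : Subgroup G, M.Normal → M ≤ N → M = ⊥ ∨ M = N) → N ≤ Gplus) := by
  have hΩne : Nat.card Ω ≠ 0 := by
    have hq : Nonempty (MulAction.orbitRel.Quotient M₀ Ω) :=
      (Nat.card_pos_iff.mp (by omega)).1
    obtain ⟨q⟩ := hq
    have : Nonempty Ω := ⟨q.out⟩
    exact Nat.card_pos.ne'
  constructor
  · rintro ⟨N, hNn, -, -, hN2, -, -⟩
    exact core_contra hΩne hdeg helusive hbi N hNn hN2
  · intro N hNn hNbot hmin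
    by_contra hnot
    -- Gplus is normal (index two)
    have hGpn : Gplus.Normal := by
      constructor
      intro n hn g
      have h1 : g * n * g⁻¹ = (g * n) * g⁻¹ := by group
      rw [h1, Subgroup.mul_mem_iff_of_index_two hGpidx,
        Subgroup.mul_mem_iff_of_index_two hGpidx, Subgroup.inv_mem_iff]
      tauto
    have hKn : (N ⊓ Gplus).Normal :=
      ⟨fun n hn g => ⟨hNn.conj_mem n hn.1 g, hGpn.conj_mem n hn.2 g⟩⟩
    rcases hmin (N ⊓ Gplus) hKn inf_le_left with hK | hK
    · -- N ⊓ Gplus = ⊥ : N has order 2, contradiction via core_contra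
      have hinj : Function.Injective ((QuotientGroup.mk' Gplus).comp N.subtype) := by
        rw [← MonoidHom.ker_eq_bot_iff, eq_bot_iff]
        intro n hn
        have h1 : (n : G) ∈ Gplus := by
          rw [MonoidHom.mem_ker, MonoidHom.comp_apply] at hn
          exact (QuotientGroup.eq_one_iff _).mp hn
        have h2 : (n : G) ∈ N ⊓ Gplus := ⟨n.2, h1⟩
        rw [hK] at h2
        rw [Subgroup.mem_bot] at h2
        exact Subgroup.mem_bot.mpr (Subtype.ext h2)
      have hcle : Nat.card N ≤ 2 := by
        have := Nat.card_le_card_of_injective _ hinj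
        rwa [← Subgroup.index_eq_card, hGpidx] at this
      have h1lt : 1 < Nat.card N := (Subgroup.one_lt_card_iff_ne_bot (H := N)).mpr hNbot
      exact core_contra hΩne hdeg helusive hbi N hNn (by omega)
    · exact hnot (inf_eq_left.mp hK)
end
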